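/- arXiv:2504.16703 — 2 statements merged into one kernel-verified Lean document; each statement's English description precedes it below -/
import Mathlib

section
/- For every μStipula^DI+ contract C, the ordering ⪯ is upward compatible with →_tp; more precisely, if ⟨C(Q, Σ, Ψ), t⟩ →_tp ⟨C(Q', Σ', Ψ'), t'⟩ and Ψ ⪯ Ψ″, then there exists Ψ‴ such that ⟨C(Q, Σ, Ψ″), t⟩ →_tp ⟨C(Q', Σ', Ψ‴), t'⟩ and Ψ' ⪯ Ψ‴. -/
namespace MicroStipula

/-- A pending event (the same shape is used for event declarations occurring in
function bodies): `time ≫_line src ⇒ tgt`.  For a declaration, `time` is the delay `k`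
of the time expression `now + k`. -/
structure Ev where
  time : ℕ
  line : ℕ
  src  : ℕ
  tgt  : ℕ
  deriving DecidableEq

/-- A function declaration `@src name { body } ⇒ @tgt`. -/
structure FunDecl where
  src  : ℕ
  name : ℕ
  body : List Ev
  tgt  : ℕ
  deriving DecidableEq

/-- A μStipula contract: a finite set of states, an initial state and
a finite set of functions. -/
structure Contract where
  states : List ℕ
  init   : ℕ
  funs   : List FunDecl
  deriving DecidableEq

/-- The `Σ` component of a configuration: either `−` or a continuation `Ψ ⇒ Q`. -/
inductive Sig where
  | none : Sig
  | cont : Multiset Ev → ℕ → Sig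
  deriving DecidableEq

/-- A configuration `⟨C(Q, Σ, Ψ), t⟩`. -/
structure Config where
  state   : ℕ
  sig     : Sig
  pending : Multiset Ev
  time    : ℕ
  deriving DecidableEq

/-- `nored(Ψ, Q)`: `Ψ` contains no event of the form `0 ≫_n Q ⇒ Q'`. -/
def nored (Ψ : Multiset Ev) (Q : ℕ) : Prop :=
  ∀ e ∈ Ψ, e.time = 0 → e.src ≠ Q

/-- `Ψ↓`: remove the events with time value `0` and decrease all other time values by one. -/
def tickDown (Ψ : Multiset Ev) : Multiset Ev :=
  (Ψ.filter fun e => e.time ≠ 0).map fun e => ⟨e.time - 1, e.line, e.src, e.tgt⟩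

/-- The multiset of pending events generated by a function body
(the place-holder `now` is dropped: `now + k` becomes the value `k`). -/
def bodyEvents (W : List Ev) : Multiset Ev := (W : Multiset Ev)

/-- `InitEv C`: the set of initial states of the events of `C`. -/
def InitEv (C : Contract) : Set ℕ :=
  {Q | ∃ f ∈ C.funs, ∃ e ∈ f.body, e.src = Q}

/-- The transition relation `→` of μStipula. -/
inductive Step (C : Contract) : Config → Config → Prop
  | func {Ψ : Multiset Ev} {t : ℕ} (f : FunDecl) (hf : f ∈ C.funs)
      (hn : nored Ψ f.src) :
      Step C ⟨f.src, Sig.none, Ψ, t⟩ ⟨f.src, Sig.cont (bodyEvents f.body) f.tgt, Ψ, t⟩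
  | stateChange {Q Q' : ℕ} {Ψ' Ψ : Multiset Ev} {t : ℕ} :
      Step C ⟨Q, Sig.cont Ψ' Q', Ψ, t⟩ ⟨Q', Sig.none, Ψ' + Ψ, t⟩
  | eventMatch {Q : ℕ} {Ψ : Multiset Ev} {t : ℕ} (e : Ev)
      (he : e ∈ Ψ) (h0 : e.time = 0) (hs : e.src = Q) :
      Step C ⟨Q, Sig.none, Ψ, t⟩ ⟨Q, Sig.cont 0 e.tgt, Ψ.erase e, t⟩
  | tick {Q : ℕ} {Ψ : Multiset Ev} {t : ℕ} (hn : nored Ψ Q) :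
      Step C ⟨Q, Sig.none, Ψ, t⟩ ⟨Q, Sig.none, tickDown Ψ, t + 1⟩

/-- The transition relation `→_tp` of μStipula^DI+ (rule (Tick) replaced by (Tick-Plus)). -/
inductive StepTP (C : Contract) : Config → Config → Prop
  | func {Ψ : Multiset Ev} {t : ℕ} (f : FunDecl) (hf : f ∈ C.funs)
      (hn : nored Ψ f.src) :
      StepTP C ⟨f.src, Sig.none, Ψ, t⟩ ⟨f.src, Sig.cont (bodyEvents f.body) f.tgt, Ψ, t⟩
  | stateChange {Q Q' : ℕ} {Ψ' Ψ : Multiset Ev} {t : ℕ} :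
      StepTP C ⟨Q, Sig.cont Ψ' Q', Ψ, t⟩ ⟨Q', Sig.none, Ψ' + Ψ, t⟩
  | eventMatch {Q : ℕ} {Ψ : Multiset Ev} {t : ℕ} (e : Ev)
      (he : e ∈ Ψ) (h0 : e.time = 0) (hs : e.src = Q) :
      StepTP C ⟨Q, Sig.none, Ψ, t⟩ ⟨Q, Sig.cont 0 e.tgt, Ψ.erase e, t⟩
  | tickPlus {Q : ℕ} {Ψ : Multiset Ev} {t : ℕ} (hn : Q ∉ InitEv C) :
      StepTP C ⟨Q, Sig.none, Ψ, t⟩ ⟨Q, Sig.none, tickDown Ψ, t + 1⟩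

/-- State reachability (w.r.t. `→`): some configuration `⟨C(Q, −, Ψ), t'⟩` is reachable
from the initial configuration `⟨C(Q_init, −, −), t⟩`. -/
def Reachable (C : Contract) (Q : ℕ) : Prop :=
  ∃ t t' Ψ, Relation.ReflTransGen (Step C)
    ⟨C.init, Sig.none, 0, t⟩ ⟨Q, Sig.none, Ψ, t'⟩

/-- State reachability w.r.t. `→_tp`. -/
def ReachableTP (C : Contract) (Q : ℕ) : Prop :=
  ∃ t t' Ψ, Relation.ReflTransGen (StepTP C)
    ⟨C.init, Sig.none, 0, t⟩ ⟨Q, Sig.none, Ψ, t'⟩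

/-- Well-formedness: every state mentioned in the contract belongs to its set of states. -/
def Contract.WF (C : Contract) : Prop :=
  C.init ∈ C.states ∧ ∀ f ∈ C.funs, f.src ∈ C.states ∧ f.tgt ∈ C.states ∧
    ∀ e ∈ f.body, e.src ∈ C.states ∧ e.tgt ∈ C.states

/-- μStipula^I : every time expression is `now + 0`. -/
def Instantaneous (C : Contract) : Prop := ∀ f ∈ C.funs, ∀ e ∈ f.body, e.time = 0

/-- μStipula^TA : every time expression is `now + k` with `k > 0`. -/
def TimeAhead (C : Contract) : Prop := ∀ f ∈ C.funs, ∀ e ∈ f.body, 0 < e.time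

/-- μStipula^D : no state is both the initial state of a function and of an event. -/
def Determinate (C : Contract) : Prop := ∀ f ∈ C.funs, f.src ∉ InitEv C

/-- μStipula^DI. -/
def DetInst (C : Contract) : Prop := Determinate C ∧ Instantaneous C

/-- A pending event of the contract `C`: it stems from an event declaration of `C`,
with a (possibly) decreased time value. -/
def EvOf (C : Contract) (e : Ev) : Prop :=
  ∃ f ∈ C.funs, ∃ d ∈ f.body,
    e.line = d.line ∧ e.src = d.src ∧ e.tgt = d.tgt ∧ e.time ≤ d.time

/-- The possible `Σ` components of configurations of `C`. -/
inductive SigOf (C : Contract) : Sig → Prop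
  | none : SigOf C Sig.none
  | func (f : FunDecl) (hf : f ∈ C.funs) : SigOf C (Sig.cont (bodyEvents f.body) f.tgt)
  | event (Q : ℕ) (hQ : Q ∈ C.states) : SigOf C (Sig.cont 0 Q)

/-- Configurations of a contract `C` (the set `𝒞_C`). -/
def ConfigOf (C : Contract) (c : Config) : Prop :=
  c.state ∈ C.states ∧ SigOf C c.sig ∧ ∀ e ∈ c.pending, EvOf C e

/-- The quasi-ordering `⪯` on configurations: same state, same `Σ`, multiset inclusion
of the pending events; the time component is disregarded. -/
def ConfigLe (c c' : Config) : Prop :=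
  c.state = c'.state ∧ c.sig = c'.sig ∧ c.pending ≤ c'.pending

/-- The (unique) shape of a (Tick) transition out of a configuration. -/
def IsTickStep (c c' : Config) : Prop :=
  c.sig = Sig.none ∧ c' = ⟨c.state, Sig.none, tickDown c.pending, c.time + 1⟩

/-- A configuration is stuck if every computation starting from it consists only of
instances of rule (Tick). -/
def Stuck (C : Contract) (c : Config) : Prop :=
  ∀ c₁ c₂, Relation.ReflTransGen (Step C) c c₁ → Step C c₁ c₂ → IsTickStep c₁ c₂

/-- A well-quasi-ordering: every infinite sequence contains an increasing pair. -/
def IsWQO {α : Type*} (r : α → α → Prop) : Prop :=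
  ∀ f : ℕ → α, ∃ i j, i < j ∧ r (f i) (f j)

/-- Upward compatibility of an ordering with a transition relation. -/
def UpwardCompatible {α : Type*} (step le : α → α → Prop) : Prop :=
  ∀ c₁ c₁' c₂, le c₁ c₁' → step c₁ c₂ →
    ∃ c₂', Relation.ReflTransGen step c₁' c₂' ∧ le c₂ c₂'

/-- Well-structured transition system. -/
def IsWSTS {α : Type*} (step le : α → α → Prop) : Prop :=
  Reflexive le ∧ Transitive le ∧ IsWQO le ∧ UpwardCompatible step le

/-- `↑𝒟` within the configurations of `C`. -/
def upSet (C : Contract) (D : Set Config) : Set Config :=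
  {c' | ConfigOf C c' ∧ ∃ c ∈ D, ConfigLe c c'}

/-- `Pred(𝒟)` w.r.t. `→_tp`, within the configurations of `C`. -/
def predTP (C : Contract) (D : Set Config) : Set Config :=
  {c | ConfigOf C c ∧ ∃ c' ∈ D, StepTP C c c'}

/-! ### Encodings -/

def Ev.equivProd : Ev ≃ ℕ × ℕ × ℕ × ℕ :=
  ⟨fun e => (e.time, e.line, e.src, e.tgt), fun p => ⟨p.1, p.2.1, p.2.2.1, p.2.2.2⟩,
   fun _ => rfl, fun _ => rfl⟩

instance : Encodable Ev := Encodable.ofEquiv _ Ev.equivProd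

def FunDecl.equivProd : FunDecl ≃ ℕ × ℕ × List Ev × ℕ :=
  ⟨fun f => (f.src, f.name, f.body, f.tgt), fun p => ⟨p.1, p.2.1, p.2.2.1, p.2.2.2⟩,
   fun _ => rfl, fun _ => rfl⟩

instance : Encodable FunDecl := Encodable.ofEquiv _ FunDecl.equivProd

def Contract.equivProd : Contract ≃ List ℕ × ℕ × List FunDecl :=
  ⟨fun C => (C.states, C.init, C.funs), fun p => ⟨p.1, p.2.1, p.2.2⟩,
   fun _ => rfl, fun _ => rfl⟩

instance : Encodable Contract := Encodable.ofEquiv _ Contract.equivProd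

def Sig.equivOption : Sig ≃ Option (Multiset Ev × ℕ) where
  toFun s := match s with | Sig.none => Option.none | Sig.cont m q => some (m, q)
  invFun o := match o with | Option.none => Sig.none | some (m, q) => Sig.cont m q
  left_inv s := by cases s <;> rfl
  right_inv o := by rcases o with _ | ⟨m, q⟩ <;> rfl

instance : Encodable Sig := Encodable.ofEquiv _ Sig.equivOption

def Config.equivProd : Config ≃ ℕ × Sig × Multiset Ev × ℕ :=
  ⟨fun c => (c.state, c.sig, c.pending, c.time), fun p => ⟨p.1, p.2.1, p.2.2.1, p.2.2.2⟩,
   fun _ => rfl, fun _ => rfl⟩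

instance : Encodable Config := Encodable.ofEquiv _ Config.equivProd

/-! ### Minsky machines -/

/-- A Minsky machine instruction (the register is `false` for `R₁`, `true` for `R₂`):
`inc r next` and `decjump r ifZero ifPos`. -/
inductive MInstr where
  | inc : Bool → ℕ → MInstr
  | decjump : Bool → ℕ → ℕ → MInstr
  deriving DecidableEq

/-- A Minsky machine. -/
structure Minsky where
  states : List ℕ
  init   : ℕ
  final  : ℕ
  prog   : List (ℕ × MInstr)
  deriving DecidableEq

/-- Well-formed Minsky machine: the final state has no instruction. -/
def Minsky.WF (M : Minsky) : Prop :=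
  M.init ∈ M.states ∧ M.final ∈ M.states ∧ (∀ i, (M.final, i) ∉ M.prog) ∧
  ∀ p ∈ M.prog, p.1 ∈ M.states ∧
    (match p.2 with
     | MInstr.inc _ q => q ∈ M.states
     | MInstr.decjump _ q q' => q ∈ M.states ∧ q' ∈ M.states)

/-- The transition relation of a Minsky machine on configurations `(Q, v₁, v₂)`. -/
inductive MStep (M : Minsky) : ℕ × ℕ × ℕ → ℕ × ℕ × ℕ → Prop
  | inc₁ {Q Q' v₁ v₂} : (Q, MInstr.inc false Q') ∈ M.prog →
      MStep M (Q, v₁, v₂) (Q', v₁ + 1, v₂)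
  | inc₂ {Q Q' v₁ v₂} : (Q, MInstr.inc true Q') ∈ M.prog →
      MStep M (Q, v₁, v₂) (Q', v₁, v₂ + 1)
  | jz₁ {Q Q' Q'' v₂} : (Q, MInstr.decjump false Q' Q'') ∈ M.prog →
      MStep M (Q, 0, v₂) (Q', 0, v₂)
  | dec₁ {Q Q' Q'' v₁ v₂} : (Q, MInstr.decjump false Q' Q'') ∈ M.prog →
      MStep M (Q, v₁ + 1, v₂) (Q'', v₁, v₂)
  | jz₂ {Q Q' Q'' v₁} : (Q, MInstr.decjump true Q' Q'') ∈ M.prog →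
      MStep M (Q, v₁, 0) (Q', v₁, 0)
  | dec₂ {Q Q' Q'' v₁ v₂} : (Q, MInstr.decjump true Q' Q'') ∈ M.prog →
      MStep M (Q, v₁, v₂ + 1) (Q'', v₁, v₂)

/-- The halting problem: the final state is reachable from `(Q₀, 0, 0)`. -/
def Minsky.Halts (M : Minsky) : Prop :=
  ∃ v₁ v₂, Relation.ReflTransGen (MStep M) (M.init, 0, 0) (M.final, v₁, v₂)

def MInstr.equivSum : MInstr ≃ (Bool × ℕ) ⊕ (Bool × ℕ × ℕ) where
  toFun i := match i with
    | MInstr.inc r q => Sum.inl (r, q)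
    | MInstr.decjump r q q' => Sum.inr (r, q, q')
  invFun s := match s with
    | Sum.inl (r, q) => MInstr.inc r q
    | Sum.inr (r, q, q') => MInstr.decjump r q q'
  left_inv i := by cases i <;> rfl
  right_inv s := by rcases s with ⟨r, q⟩ | ⟨r, q, q'⟩ <;> rfl

instance : Encodable MInstr := Encodable.ofEquiv _ MInstr.equivSum

def Minsky.equivProd : Minsky ≃ List ℕ × ℕ × ℕ × List (ℕ × MInstr) :=
  ⟨fun M => (M.states, M.init, M.final, M.prog), fun p => ⟨p.1, p.2.1, p.2.2.1, p.2.2.2⟩,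
   fun _ => rfl, fun _ => rfl⟩

instance : Encodable Minsky := Encodable.ofEquiv _ Minsky.equivProd

/-! ### Clauses -/

/-- A clause of a contract: either a function `⟨Q, f, Q'⟩` or an event `⟨Q, ev_n, Q'⟩`. -/
inductive Clause where
  | fn : ℕ → ℕ → ℕ → Clause
  | ev : ℕ → ℕ → ℕ → Clause
  deriving DecidableEq

/-- The clause belongs to the contract. -/
def ClauseOf (C : Contract) : Clause → Prop
  | Clause.fn Q g Q' => ∃ f ∈ C.funs, f.src = Q ∧ f.name = g ∧ f.tgt = Q'
  | Clause.ev Q n Q' => ∃ f ∈ C.funs, ∃ e ∈ f.body, e.line = n ∧ e.src = Q ∧ e.tgt = Q'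

/-- Some computation starting from the initial configuration of `C` contains a transition
executing the given clause: an instance of rule (Function) invoking the function, resp.
an instance of rule (Event-Match) firing the event. -/
def Executes (C : Contract) : Clause → Prop
  | Clause.fn Q g Q' => ∃ t t' Ψ, ∃ f ∈ C.funs,
      f.src = Q ∧ f.name = g ∧ f.tgt = Q' ∧ nored Ψ Q ∧
      Relation.ReflTransGen (Step C) ⟨C.init, Sig.none, 0, t⟩ ⟨Q, Sig.none, Ψ, t'⟩
  | Clause.ev Q n Q' => ∃ t t' Ψ, ∃ e ∈ Ψ,
      e.time = 0 ∧ Ev.line e = n ∧ e.src = Q ∧ e.tgt = Q' ∧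
      Relation.ReflTransGen (Step C) ⟨C.init, Sig.none, 0, t⟩ ⟨Q, Sig.none, Ψ, t'⟩

def Clause.equivSum : Clause ≃ (ℕ × ℕ × ℕ) ⊕ (ℕ × ℕ × ℕ) where
  toFun c := match c with
    | Clause.fn a b d => Sum.inl (a, b, d)
    | Clause.ev a b d => Sum.inr (a, b, d)
  invFun s := match s with
    | Sum.inl (a, b, d) => Clause.fn a b d
    | Sum.inr (a, b, d) => Clause.ev a b d
  left_inv c := by cases c <;> rfl
  right_inv s := by rcases s with ⟨a, b, d⟩ | ⟨a, b, d⟩ <;> rfl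

instance : Encodable Clause := Encodable.ofEquiv _ Clause.equivSum

/-- `⟦v₁, v₂⟧_Q`: the multiset made of `v₁` copies of a first event, `v₂` copies of a
second event, and one event depending on the machine state `Q`. -/
def msem (e₁ e₂ : Minsky → Ev) (e₃ : Minsky → ℕ → Ev) (M : Minsky)
    (Q v₁ v₂ : ℕ) : Multiset Ev :=
  Multiset.replicate v₁ (e₁ M) + Multiset.replicate v₂ (e₂ M) + {e₃ M Q}

/-! Every rule of `→_tp` except (Function) only needs the pending events it consumes, so it
stays enabled when more events are pending. The premise `nored(Ψ, Q)` of (Function) is not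
monotone in `Ψ`, but in a determinate contract it holds for free: every pending event starts in
a state of `InitEv C`, and no function does. -/

theorem EvOf.src_mem_initEv {C : Contract} {e : Ev} (he : EvOf C e) : e.src ∈ InitEv C := by
  obtain ⟨f, hf, d, hd, -, hsrc, -, -⟩ := he
  exact ⟨f, hf, d, hd, hsrc.symm⟩

theorem nored_of_not_mem_initEv {C : Contract} {Ψ : Multiset Ev} {Q : ℕ}
    (hΨ : ∀ e ∈ Ψ, EvOf C e) (hQ : Q ∉ InitEv C) : nored Ψ Q :=
  fun e he _ hsrc => hQ (hsrc ▸ (hΨ e he).src_mem_initEv)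

theorem tickDown_mono {Ψ Ψ' : Multiset Ev} (h : Ψ ≤ Ψ') : tickDown Ψ ≤ tickDown Ψ' :=
  Multiset.map_le_map (Multiset.filter_le_filter _ h)

theorem stepTP_upward_compatible_general (C : Contract) (hDI : DetInst C)
    (Q Q' : ℕ) (S S' : Sig) (Ψ Ψ' Ψ'' : Multiset Ev) (t t' : ℕ)
    (h₂ : ConfigOf C ⟨Q, S, Ψ'', t⟩)
    (hstep : StepTP C ⟨Q, S, Ψ, t⟩ ⟨Q', S', Ψ', t'⟩)
    (hle : Ψ ≤ Ψ'') :
    ∃ Θ : Multiset Ev,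
      StepTP C ⟨Q, S, Ψ'', t⟩ ⟨Q', S', Θ, t'⟩ ∧ Ψ' ≤ Θ := by
  cases hstep with
  | func f hf _ =>
    exact ⟨Ψ'', .func f hf (nored_of_not_mem_initEv h₂.2.2 (hDI.1 f hf)), hle⟩
  | stateChange =>
    exact ⟨_ + Ψ'', .stateChange, add_le_add_right hle _⟩
  | eventMatch e he h0 hs =>
    exact ⟨Ψ''.erase e, .eventMatch e (Multiset.mem_of_le hle he) h0 hs,
      Multiset.erase_le_erase e hle⟩
  | tickPlus hQ =>
    exact ⟨tickDown Ψ'', .tickPlus hQ, tickDown_mono hle⟩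

/-- For every μStipula^DI+ contract `C`, the ordering `⪯` is upward
compatible with `→_tp`: if `⟨C(Q, S, Ψ), t⟩ →_tp ⟨C(Q', S', Ψ'), t'⟩` and `Ψ ⪯ Ψ''`,
then there exists a multiset `Θ` of pending events with
`⟨C(Q, S, Ψ''), t⟩ →_tp ⟨C(Q', S', Θ), t'⟩` and `Ψ' ⪯ Θ`. -/
theorem stepTP_upward_compatible (C : Contract) (hwf : C.WF) (hDI : DetInst C)
    (Q Q' : ℕ) (S S' : Sig) (Ψ Ψ' Ψ'' : Multiset Ev) (t t' : ℕ)
    (h₁ : ConfigOf C ⟨Q, S, Ψ, t⟩) (h₂ : ConfigOf C ⟨Q, S, Ψ'', t⟩)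
    (hstep : StepTP C ⟨Q, S, Ψ, t⟩ ⟨Q', S', Ψ', t'⟩)
    (hle : Ψ ≤ Ψ'') :
    ∃ Θ : Multiset Ev,
      StepTP C ⟨Q, S, Ψ'', t⟩ ⟨Q', S', Θ, t'⟩ ∧ Ψ' ≤ Θ :=
  stepTP_upward_compatible_general C hDI Q Q' S S' Ψ Ψ' Ψ'' t t' h₂ hstep hle

end MicroStipula
end

section
/- There is a computable map assigning to each Minsky machine M (with states Q0, …, Qn, initial state Q0 and final state Q_F) a μStipula^I contract I_M whose set of states includes the states of M, together with, for every machine state Q and v1, v2 ∈ ℕ, a multiset ⟦v1, v2⟧_Q of pending events consisting of v1 copies of the event 0 ≫ dec1 ⇒ ackdec1, v2 copies of the event 0 ≫ dec2 ⇒ ackdec2, and one event 0 ≫ aQ ⇒ bQ, such that: (0) the initial configuration of I_M can reach via →* the configuration I_M(Q0, −, ⟦0, 0⟧_{Q0}); (1) if (Q_i, v1, v2) →_M (Q_j, v1', v2') then I_M(Q_i, −, ⟦v1, v2⟧_{Q_i}) →* I_M(Q_j, −, ⟦v1', v2'⟧_{Q_j}); (2) whenever I_M(Q_i, −, ⟦v1,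 v2⟧_{Q_i}) →* I_M(S, Σ, Ψ) → I_M(Q_j, Σ', Ψ') with S ∉ {Q0, …, Qn} and Q_j ∈ {Q0, …, Qn}, then Σ' = − and Ψ' = ⟦v1', v2'⟧_{Q_j} for some v1', v2' with (Q_i, v1, v2) →_M* (Q_j, v1', v2'). Consequently, M halts if and only if the state Q_F is reachable in I_M. -/
/-!
The contract keeps the state `Q` of `M` as its own state, the registers as `v₁ + v₂` pending
events `cnt r : dec r ⇒ ack r`, and a token `tok Q : a Q ⇒ b Q`. An instruction `p` at `Q` is
simulated by a fixed chain of transitions: a function at `Q` schedules a guard `guard p`, the token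
moves the contract to `b Q`, a function at `b Q` schedules the next token together with an event
`fin p T` to the target `T` (for a decrement this happens at `dec r` when no `cnt r` is pending, and
otherwise at `ack r` after one `cnt r` has fired), and then `guard p` and `fin p T` fire in turn.
Every deviation loses a token or the guard: a function of another instruction at `b Q` leaves
`guard p` unmatched, and a (Tick) discards all pending events, all of them being instantaneous.
The contract is then stuck outside the states of `M`. Grouping each transition with the
(State-Change) that follows it, the configurations reachable from an encoded machine configuration
are thus described by an explicit invariant, whose live members carry the machine configuration
they simulate.
-/

namespace MicroStipula

open Relation

@[simp] theorem nored_zero (Q : ℕ) : nored 0 Q := by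
  simp [nored]

@[simp] theorem nored_cons {e : Ev} {Ψ : Multiset Ev} {Q : ℕ} :
    nored (e ::ₘ Ψ) Q ↔ (e.time = 0 → e.src ≠ Q) ∧ nored Ψ Q := by
  simp [nored]

theorem tickDown_eq_zero {Ψ : Multiset Ev} (h : ∀ e ∈ Ψ, e.time = 0) : tickDown Ψ = 0 := by
  simpa [tickDown, Multiset.filter_eq_nil] using h

theorem exists_src_eq_of_mem_tickDown {Ψ : Multiset Ev} {e : Ev} (he : e ∈ tickDown Ψ) :
    ∃ e' ∈ Ψ, e'.src = e.src := by
  obtain ⟨e', he', rfl⟩ := Multiset.mem_map.1 he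
  exact ⟨e', Multiset.mem_of_mem_filter he', rfl⟩

@[simp] theorem bodyEvents_cons (e : Ev) (W : List Ev) :
    bodyEvents (e :: W) = e ::ₘ bodyEvents W := rfl

@[simp] theorem bodyEvents_nil : bodyEvents [] = 0 := rfl

theorem bodyEvents_cons_add (e : Ev) (W : List Ev) (Ψ : Multiset Ev) :
    bodyEvents (e :: W) + Ψ = e ::ₘ (bodyEvents W + Ψ) :=
  Multiset.cons_add e (bodyEvents W) Ψ

theorem bodyEvents_nil_add (Ψ : Multiset Ev) : bodyEvents [] + Ψ = Ψ :=
  zero_add Ψ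

/-- A (Function) or (Event-Match) transition followed by its (State-Change), or a (Tick), as a
step between configurations `C(Q, −, Ψ)` whose time is forgotten. -/
inductive MacroStep (C : Contract) : ℕ × Multiset Ev → ℕ × Multiset Ev → Prop
  | func {Ψ : Multiset Ev} (f : FunDecl) (hf : f ∈ C.funs) (hn : nored Ψ f.src) :
      MacroStep C (f.src, Ψ) (f.tgt, bodyEvents f.body + Ψ)
  | event {Ψ : Multiset Ev} (e : Ev) (he : e ∈ Ψ) (h0 : e.time = 0) :
      MacroStep C (e.src, Ψ) (e.tgt, Ψ.erase e)
  | tick {Q : ℕ} {Ψ : Multiset Ev} (hn : nored Ψ Q) : MacroStep C (Q, Ψ) (Q, tickDown Ψ)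

namespace MacroStep

variable {C : Contract}

theorem of_func {f : FunDecl} {S T : ℕ} {Ψ Ψ' : Multiset Ev} (hf : f ∈ C.funs)
    (hS : f.src = S) (hT : f.tgt = T) (hn : nored Ψ S) (hΨ : bodyEvents f.body + Ψ = Ψ') :
    MacroStep C (S, Ψ) (T, Ψ') := by
  subst hS hT hΨ
  exact func f hf hn

theorem of_event {e : Ev} {S T : ℕ} {Ψ Ψ' : Multiset Ev} (he : e ∈ Ψ) (h0 : e.time = 0)
    (hS : e.src = S) (hT : e.tgt = T) (hΨ : Ψ.erase e = Ψ') :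
    MacroStep C (S, Ψ) (T, Ψ') := by
  subst hS hT hΨ
  exact event e he h0

theorem exists_steps {x y : ℕ × Multiset Ev} (h : MacroStep C x y) (t : ℕ) :
    ∃ t', ReflTransGen (Step C) ⟨x.1, .none, x.2, t⟩ ⟨y.1, .none, y.2, t'⟩ := by
  cases h with
  | func f hf hn => exact ⟨t, .tail (.single (.func f hf hn)) .stateChange⟩
  | @event Ψ e he h0 =>
    have h := Step.stateChange (C := C) (Q := e.src) (Q' := e.tgt) (Ψ' := 0) (Ψ := Ψ.erase e)
      (t := t)
    rw [zero_add] at h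
    exact ⟨t, .tail (.single (.eventMatch e he h0 rfl)) h⟩
  | tick hn => exact ⟨t + 1, .single (.tick hn)⟩

theorem exists_steps_of_reflTransGen {x y : ℕ × Multiset Ev}
    (h : ReflTransGen (MacroStep C) x y) (t : ℕ) :
    ∃ t', ReflTransGen (Step C) ⟨x.1, .none, x.2, t⟩ ⟨y.1, .none, y.2, t'⟩ := by
  induction h with
  | refl => exact ⟨t, .refl⟩
  | tail _ hyz ih =>
    obtain ⟨t₁, h₁⟩ := ih
    obtain ⟨t₂, h₂⟩ := hyz.exists_steps t₁
    exact ⟨t₂, h₁.trans h₂⟩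

end MacroStep

/-- An invariant `P` of the configurations `C(Q, −, Ψ)`, extended to the configurations
`C(Q, Ψ' ⇒ Q', Ψ)` that lie half-way through a macro-step. -/
def Lifted (C : Contract) (P : ℕ × Multiset Ev → Prop) : Config → Prop
  | ⟨Q, .none, Ψ, _⟩ => P (Q, Ψ)
  | ⟨Q, .cont Ψ' Q', Ψ, _⟩ => ∃ Ψ₀, P (Q, Ψ₀) ∧ MacroStep C (Q, Ψ₀) (Q', Ψ' + Ψ)

namespace Lifted

variable {C : Contract} {P : ℕ × Multiset Ev → Prop}

theorem step (hP : ∀ x y, P x → MacroStep C x y → P y) {c c' : Config}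
    (hc : Lifted C P c) (h : Step C c c') : Lifted C P c' := by
  cases h with
  | func f hf hn => exact ⟨_, hc, .func f hf hn⟩
  | stateChange =>
    obtain ⟨Ψ₀, hΨ₀, hm⟩ := hc
    exact hP _ _ hΨ₀ hm
  | eventMatch e he h0 hs =>
    subst hs
    exact ⟨_, hc, (zero_add (Multiset.erase _ e)).symm ▸ .event e he h0⟩
  | tick hn => exact hP _ _ hc (.tick hn)

theorem reflTransGen (hP : ∀ x y, P x → MacroStep C x y → P y) {c c' : Config}
    (hc : Lifted C P c) (h : ReflTransGen (Step C) c c') : Lifted C P c' := by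
  induction h with
  | refl => exact hc
  | tail _ h ih => exact ih.step hP h

theorem macroStep_of_step_of_state_ne {c : Config} {Q' : ℕ} {σ' : Sig} {Ψ' : Multiset Ev}
    {t' : ℕ} (hc : Lifted C P c) (h : Step C c ⟨Q', σ', Ψ', t'⟩) (hne : c.state ≠ Q') :
    σ' = .none ∧ ∃ Ψ₀, P (c.state, Ψ₀) ∧ MacroStep C (c.state, Ψ₀) (Q', Ψ') := by
  cases h with
  | stateChange => exact ⟨rfl, hc⟩
  | _ => exact absurd rfl hne

end Lifted

def incReg : Bool → ℕ × ℕ → ℕ × ℕ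
  | false, (v₁, v₂) => (v₁ + 1, v₂)
  | true, (v₁, v₂) => (v₁, v₂ + 1)

def getReg : Bool → ℕ × ℕ → ℕ
  | false, v => v.1
  | true, v => v.2

theorem exists_eq_incReg {r : Bool} {v : ℕ × ℕ} (h : getReg r v ≠ 0) :
    ∃ v', v = incReg r v' := by
  rcases v with ⟨v₁, v₂⟩
  cases r
  · obtain ⟨k, rfl⟩ := Nat.exists_eq_succ_of_ne_zero h
    exact ⟨(k, v₂), rfl⟩
  · obtain ⟨k, rfl⟩ := Nat.exists_eq_succ_of_ne_zero h
    exact ⟨(v₁, k), rfl⟩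

theorem mem_prog_of_snd_eq {M : Minsky} {p : ℕ × MInstr} {i : MInstr} (hp : p ∈ M.prog)
    (h : p.2 = i) : (p.1, i) ∈ M.prog :=
  h ▸ hp

namespace MStep

variable {M : Minsky} {Q Q' Q'' : ℕ} {r : Bool} {v : ℕ × ℕ}

theorem of_inc (h : (Q, MInstr.inc r Q') ∈ M.prog) : MStep M (Q, v) (Q', incReg r v) := by
  rcases v with ⟨v₁, v₂⟩
  cases r
  exacts [inc₁ h, inc₂ h]

theorem of_dec (h : (Q, MInstr.decjump r Q' Q'') ∈ M.prog) :
    MStep M (Q, incReg r v) (Q'', v) := by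
  rcases v with ⟨v₁, v₂⟩
  cases r
  exacts [dec₁ h, dec₂ h]

theorem of_jz (h : (Q, MInstr.decjump r Q' Q'') ∈ M.prog) (hz : getReg r v = 0) :
    MStep M (Q, v) (Q', v) := by
  rcases v with ⟨v₁, v₂⟩
  cases r <;> simp only [getReg] at hz <;> subst hz
  exacts [jz₁ h, jz₂ h]

theorem mem_states (hWF : M.WF) {x y : ℕ × ℕ × ℕ} (h : MStep M x y) : y.1 ∈ M.states := by
  cases h with
  | inc₁ h | inc₂ h => exact (hWF.2.2.2 _ h).2
  | jz₁ h | jz₂ h => exact (hWF.2.2.2 _ h).2.1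
  | dec₁ h | dec₂ h => exact (hWF.2.2.2 _ h).2.2

theorem mem_states_of_reflTransGen (hWF : M.WF) {x y : ℕ × ℕ × ℕ} (hx : x.1 ∈ M.states)
    (h : ReflTransGen (MStep M) x y) : y.1 ∈ M.states := by
  induction h with
  | refl => exact hx
  | tail _ h _ => exact h.mem_states hWF

end MStep

namespace Encoding

/-- The states of `I_M` besides those of `M`; `a Q`, `b Q`, `dec r`, `ack r` are the paper's
`aQ`, `bQ`, `decᵣ`, `ackdecᵣ`. -/
inductive Loc where
  | start | boot
  | dec (r : Bool) | ack (r : Bool)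
  | a (Q : ℕ) | b (Q : ℕ)
  | u (p : ℕ × MInstr) | w (p : ℕ × MInstr)

def Loc.equivSum :
    Loc ≃ Unit ⊕ Unit ⊕ Bool ⊕ Bool ⊕ ℕ ⊕ ℕ ⊕ (ℕ × MInstr) ⊕ (ℕ × MInstr) where
  toFun
    | .start => .inl () | .boot => .inr (.inl ())
    | .dec r => .inr (.inr (.inl r)) | .ack r => .inr (.inr (.inr (.inl r)))
    | .a Q => .inr (.inr (.inr (.inr (.inl Q))))
    | .b Q => .inr (.inr (.inr (.inr (.inr (.inl Q)))))
    | .u p => .inr (.inr (.inr (.inr (.inr (.inr (.inl p))))))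
    | .w p => .inr (.inr (.inr (.inr (.inr (.inr (.inr p))))))
  invFun
    | .inl () => .start | .inr (.inl ()) => .boot
    | .inr (.inr (.inl r)) => .dec r | .inr (.inr (.inr (.inl r))) => .ack r
    | .inr (.inr (.inr (.inr (.inl Q)))) => .a Q
    | .inr (.inr (.inr (.inr (.inr (.inl Q))))) => .b Q
    | .inr (.inr (.inr (.inr (.inr (.inr (.inl p)))))) => .u p
    | .inr (.inr (.inr (.inr (.inr (.inr (.inr p)))))) => .w p
  left_inv l := by cases l <;> rfl
  right_inv s := by
    rcases s with ⟨⟩ | ⟨⟩ | _ | _ | _ | _ | _ | _ <;> rfl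

instance : Encodable Loc := Encodable.ofEquiv _ Loc.equivSum

def Loc.HasFun : Loc → Prop
  | .start | .b _ | .dec _ | .ack _ => True
  | _ => False

variable (M : Minsky)

def base : ℕ := M.states.sum + 1

/-- Numbered above every state of `M`. -/
def aux (l : Loc) : ℕ := base M + Encodable.encode l

@[simp] def ev (s t : ℕ) : Ev := ⟨0, 0, s, t⟩

@[simp] def fn (s : ℕ) (body : List Ev) (t : ℕ) : FunDecl := ⟨s, 0, body, t⟩

@[simp] def cnt (r : Bool) : Ev := ev (aux M (.dec r)) (aux M (.ack r))
@[simp] def tok (Q : ℕ) : Ev := ev (aux M (.a Q)) (aux M (.b Q))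
@[simp] def guard (p : ℕ × MInstr) : Ev := ev (aux M (.u p)) (aux M (.w p))
@[simp] def fin (p : ℕ × MInstr) (T : ℕ) : Ev := ev (aux M (.w p)) T
@[simp] def bootEv : Ev := ev (aux M .boot) M.init

def startFun : FunDecl := fn (aux M .start) [bootEv M, tok M M.init] (aux M .boot)

def chooseFun (p : ℕ × MInstr) : FunDecl := fn p.1 [guard M p] (aux M (.a p.1))

def execFuns (p : ℕ × MInstr) : List FunDecl :=
  match p.2 with
  | .inc r Q' => [fn (aux M (.b p.1)) [fin M p Q', tok M Q', cnt M r] (aux M (.u p))]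
  | .decjump r Q' Q'' =>
    [fn (aux M (.b p.1)) [] (aux M (.dec r)),
     fn (aux M (.dec r)) [fin M p Q', tok M Q'] (aux M (.u p)),
     fn (aux M (.ack r)) [fin M p Q'', tok M Q''] (aux M (.u p))]

def locs : List Loc :=
  [.start, .boot, .dec false, .dec true, .ack false, .ack true] ++
    M.states.map .a ++ M.states.map .b ++ M.prog.map .u ++ M.prog.map .w

/-- The contract `I_M`. -/
def enc : Contract :=
  ⟨M.states ++ (locs M).map (aux M), aux M .start,
    startFun M :: M.prog.flatMap (fun p => chooseFun M p :: execFuns M p)⟩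

def counters (v : ℕ × ℕ) : Multiset Ev :=
  Multiset.replicate v.1 (cnt M false) + Multiset.replicate v.2 (cnt M true)

theorem msem_eq (Q v₁ v₂ : ℕ) :
    msem (fun M => cnt M false) (fun M => cnt M true) tok M Q v₁ v₂ =
      tok M Q ::ₘ counters M (v₁, v₂) := by
  rw [msem, add_comm, Multiset.singleton_add]
  rfl

@[simp] theorem aux_inj {l l' : Loc} : aux M l = aux M l' ↔ l = l' := by
  simp [aux, Encodable.encode_inj]

theorem aux_ne_of_mem {Q : ℕ} (hQ : Q ∈ M.states) (l : Loc) : aux M l ≠ Q := by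
  have := List.le_sum_of_mem hQ
  unfold aux base
  omega

@[simp] theorem aux_not_mem (l : Loc) : aux M l ∉ M.states :=
  fun h => aux_ne_of_mem M h l rfl

theorem mem_counters {e : Ev} {v : ℕ × ℕ} :
    e ∈ counters M v ↔ ∃ r, getReg r v ≠ 0 ∧ e = cnt M r := by
  simp [counters, Multiset.mem_replicate, getReg, and_comm, eq_comm]

theorem time_eq_zero_of_mem_counters {e : Ev} {v : ℕ × ℕ} (he : e ∈ counters M v) :
    e.time = 0 := by
  obtain ⟨r, -, rfl⟩ := (mem_counters M).1 he
  rfl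

theorem cnt_cons_counters (r : Bool) (v : ℕ × ℕ) :
    cnt M r ::ₘ counters M v = counters M (incReg r v) := by
  rcases v with ⟨v₁, v₂⟩
  cases r <;> simp [counters, incReg, Multiset.replicate_succ]

theorem nored_counters {S : ℕ} {v : ℕ × ℕ} :
    nored (counters M v) S ↔ ∀ r, getReg r v ≠ 0 → aux M (.dec r) ≠ S := by
  simp only [nored, mem_counters]
  constructor
  · exact fun h r hr => h _ ⟨r, hr, rfl⟩ rfl
  · rintro h _ ⟨r, hr, rfl⟩ -
    exact h r hr

theorem nored_counters_dec {v : ℕ × ℕ} {r : Bool} :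
    nored (counters M v) (aux M (.dec r)) ↔ getReg r v = 0 := by
  rw [nored_counters]
  constructor
  · intro h
    by_contra hr
    exact h r hr rfl
  · rintro hz r' hr' h
    simp only [aux_inj, Loc.dec.injEq] at h
    exact hr' (h ▸ hz)

inductive IsFun : FunDecl → Prop
  | start : IsFun (startFun M)
  | choose {p : ℕ × MInstr} (hp : p ∈ M.prog) : IsFun (chooseFun M p)
  | inc {p : ℕ × MInstr} {r : Bool} {Q' : ℕ} (hp : p ∈ M.prog) (h : p.2 = .inc r Q') :
      IsFun (fn (aux M (.b p.1)) [fin M p Q', tok M Q', cnt M r] (aux M (.u p)))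
  | test {p : ℕ × MInstr} {r : Bool} {Q' Q'' : ℕ} (hp : p ∈ M.prog)
      (h : p.2 = .decjump r Q' Q'') : IsFun (fn (aux M (.b p.1)) [] (aux M (.dec r)))
  | zero {p : ℕ × MInstr} {r : Bool} {Q' Q'' : ℕ} (hp : p ∈ M.prog)
      (h : p.2 = .decjump r Q' Q'') :
      IsFun (fn (aux M (.dec r)) [fin M p Q', tok M Q'] (aux M (.u p)))
  | pos {p : ℕ × MInstr} {r : Bool} {Q' Q'' : ℕ} (hp : p ∈ M.prog)
      (h : p.2 = .decjump r Q' Q'') :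
      IsFun (fn (aux M (.ack r)) [fin M p Q'', tok M Q''] (aux M (.u p)))

theorem mem_funs_iff {f : FunDecl} : f ∈ (enc M).funs ↔ IsFun M f := by
  simp only [enc, List.mem_cons, List.mem_flatMap]
  constructor
  · rintro (rfl | ⟨⟨Q, i⟩, hp, rfl | hf⟩)
    · exact .start
    · exact .choose hp
    · cases i with
      | inc r Q' =>
        obtain rfl := List.mem_singleton.1 hf
        exact .inc (p := (Q, _)) hp rfl
      | decjump r Q' Q'' =>
        simp only [execFuns, List.mem_cons, List.not_mem_nil, or_false] at hf
        rcases hf with rfl | rfl | rfl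
        exacts [.test (p := (Q, _)) hp rfl, .zero (p := (Q, _)) hp rfl,
          .pos (p := (Q, _)) hp rfl]
  · rintro (_ | hp | ⟨hp, h⟩ | ⟨hp, h⟩ | ⟨hp, h⟩ | ⟨hp, h⟩)
    · exact .inl rfl
    · exact .inr ⟨_, hp, .inl rfl⟩
    all_goals exact .inr ⟨_, hp, .inr (by simp [execFuns, h])⟩

theorem hasFun_of_src_eq (hWF : M.WF) {f : FunDecl} (hf : f ∈ (enc M).funs) {l : Loc}
    (h : f.src = aux M l) : l.HasFun := by
  rw [mem_funs_iff] at hf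
  cases hf with
  | choose hp => exact absurd h.symm (aux_ne_of_mem M (hWF.2.2.2 _ hp).1 l)
  | _ =>
    simp only [startFun, fn, aux_inj] at h
    subst h
    trivial

theorem tgt_not_mem {f : FunDecl} (hf : f ∈ (enc M).funs) : f.tgt ∉ M.states := by
  rw [mem_funs_iff] at hf
  cases hf <;> simp [startFun, chooseFun]

theorem enc_wf (hWF : M.WF) : (enc M).WF := by
  refine ⟨by simp [enc, locs], fun f hf => ?_⟩
  rw [mem_funs_iff] at hf
  cases hf with
  | start => simp [enc, locs, startFun, hWF.1]
  | choose hp => simp [enc, locs, chooseFun, hp, (hWF.2.2.2 _ hp).1, -Prod.exists]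
  | inc hp h | test hp h | zero hp h | pos hp h =>
    have := hWF.2.2.2 _ hp
    rw [h] at this
    simp [enc, locs, hp, this, -Prod.exists]

theorem enc_instantaneous : Instantaneous (enc M) := by
  intro f hf e he
  rw [mem_funs_iff] at hf
  cases hf <;> simp [startFun, chooseFun] at he <;> rcases he with rfl | rfl | rfl <;> rfl

/-- Configurations after a (Tick) has destroyed a token. -/
def Dead (x : ℕ × Multiset Ev) : Prop :=
  ∃ l ≠ Loc.start, x.1 = aux M l ∧ (x.2 = 0 ∨ ¬ l.HasFun ∧ ∀ e ∈ x.2, e.src ≠ x.1)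

theorem dead_of_mem_funs {f : FunDecl} (hf : f ∈ (enc M).funs)
    (hs : f.src ≠ aux M .start) : Dead M (f.tgt, bodyEvents f.body) := by
  rw [mem_funs_iff] at hf
  cases hf with
  | start => exact absurd rfl hs
  | test => exact ⟨_, by simp, rfl, .inl rfl⟩
  | _ => exact ⟨_, by simp, rfl, .inr ⟨by simp [Loc.HasFun], by simp [chooseFun]⟩⟩

theorem Dead.macroStep (hWF : M.WF) {x y : ℕ × Multiset Ev} (hx : Dead M x)
    (h : MacroStep (enc M) x y) : Dead M y := by
  obtain ⟨l, hl, hS, hΨ⟩ := hx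
  cases h with
  | func f hf =>
    dsimp only at hS hΨ
    rcases hΨ with rfl | ⟨hl', -⟩
    · simpa using dead_of_mem_funs M hf (by simpa [hS] using hl)
    · exact absurd (hasFun_of_src_eq M hWF hf hS) hl'
  | event e he =>
    dsimp only at hΨ
    rcases hΨ with rfl | ⟨-, hsrc⟩
    · simp at he
    · exact absurd rfl (hsrc e he)
  | tick =>
    dsimp only at hS hΨ
    refine ⟨l, hl, hS, ?_⟩
    rcases hΨ with rfl | ⟨hl', hsrc⟩
    · exact .inl (by simp [tickDown])
    · refine .inr ⟨hl', fun e he => ?_⟩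
      obtain ⟨e', he', hsrc'⟩ := exists_src_eq_of_mem_tickDown he
      exact hsrc' ▸ hsrc e' he'

section Invariant

variable (x₀ : ℕ × ℕ × ℕ)

/-- Contains the configurations `C(Q, −, Ψ)` reachable from `C(x₀.1, −, ⟦x₀.2⟧_{x₀.1})`, and those
reachable from the initial configuration when `M` reaches `(Q₀, 0, 0)` from `x₀`. Each live one
records the machine configuration it simulates, which `M` reaches from `x₀`. -/
inductive Inv : ℕ × Multiset Ev → Prop
  | start (h : ReflTransGen (MStep M) x₀ (M.init, 0, 0)) : Inv (aux M .start, 0)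
  | boot (h : ReflTransGen (MStep M) x₀ (M.init, 0, 0)) :
      Inv (aux M .boot, bootEv M ::ₘ {tok M M.init})
  | machine {Q : ℕ} {v : ℕ × ℕ} (h : ReflTransGen (MStep M) x₀ (Q, v)) :
      Inv (Q, tok M Q ::ₘ counters M v)
  | halted {Q : ℕ} {v : ℕ × ℕ} (h : ReflTransGen (MStep M) x₀ (Q, v)) : Inv (Q, 0)
  | chosen {p : ℕ × MInstr} {v : ℕ × ℕ} (h : ReflTransGen (MStep M) x₀ (p.1, v)) :
      Inv (aux M (.a p.1), guard M p ::ₘ tok M p.1 ::ₘ counters M v)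
  | guarded {p : ℕ × MInstr} {v : ℕ × ℕ} (h : ReflTransGen (MStep M) x₀ (p.1, v)) :
      Inv (aux M (.b p.1), guard M p ::ₘ counters M v)
  | testing {p : ℕ × MInstr} {r : Bool} {v : ℕ × ℕ} (h : ReflTransGen (MStep M) x₀ (p.1, v)) :
      Inv (aux M (.dec r), guard M p ::ₘ counters M v)
  | decremented {p : ℕ × MInstr} {r : Bool} {v : ℕ × ℕ}
      (h : ReflTransGen (MStep M) x₀ (p.1, incReg r v)) :
      Inv (aux M (.ack r), guard M p ::ₘ counters M v)
  /-- The function that fired may belong to an instruction `q ≠ p`; then `guard p` never fires. -/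
  | committed {p q : ℕ × MInstr} {T : ℕ} {v : ℕ × ℕ}
      (h : q = p → ReflTransGen (MStep M) x₀ (T, v)) :
      Inv (aux M (.u q), fin M q T ::ₘ tok M T ::ₘ guard M p ::ₘ counters M v)
  | finishing {p : ℕ × MInstr} {T : ℕ} {v : ℕ × ℕ} (h : ReflTransGen (MStep M) x₀ (T, v)) :
      Inv (aux M (.w p), fin M p T ::ₘ tok M T ::ₘ counters M v)
  | dead {x : ℕ × Multiset Ev} (h : Dead M x) : Inv x

variable {M x₀}

theorem Inv.func_of_guarded (hWF : M.WF) {p : ℕ × MInstr} {v : ℕ × ℕ}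
    (h : ReflTransGen (MStep M) x₀ (p.1, v)) {f : FunDecl} (hf : f ∈ (enc M).funs)
    (hs : f.src = aux M (.b p.1)) :
    Inv M x₀ (f.tgt, bodyEvents f.body + guard M p ::ₘ counters M v) := by
  rw [mem_funs_iff] at hf
  cases hf with
  | choose hq => exact absurd hs.symm (aux_ne_of_mem M (hWF.2.2.2 _ hq).1 _)
  | @inc q r Q' hq hq2 =>
    simp only [fn, aux_inj, Loc.b.injEq] at hs
    simp only [fn, bodyEvents_cons_add, bodyEvents_nil_add, Multiset.cons_swap (cnt M r),
      cnt_cons_counters]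
    refine .committed fun hqp => ?_
    subst hqp
    exact h.tail (.of_inc (mem_prog_of_snd_eq hq hq2))
  | test => exact .testing h
  | _ => simp [startFun] at hs

theorem Inv.func_of_testing (hWF : M.WF) {p : ℕ × MInstr} {r : Bool} {v : ℕ × ℕ}
    (h : ReflTransGen (MStep M) x₀ (p.1, v)) {f : FunDecl} (hf : f ∈ (enc M).funs)
    (hs : f.src = aux M (.dec r)) (hz : getReg r v = 0) :
    Inv M x₀ (f.tgt, bodyEvents f.body + guard M p ::ₘ counters M v) := by
  rw [mem_funs_iff] at hf
  cases hf with
  | choose hq => exact absurd hs.symm (aux_ne_of_mem M (hWF.2.2.2 _ hq).1 _)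
  | @zero q r' Q' Q'' hq hq2 =>
    simp only [fn, aux_inj, Loc.dec.injEq] at hs
    subst hs
    simp only [fn, bodyEvents_cons_add, bodyEvents_nil_add]
    refine .committed fun hqp => ?_
    subst hqp
    exact h.tail (.of_jz (mem_prog_of_snd_eq hq hq2) hz)
  | _ => simp [startFun] at hs

theorem Inv.func_of_decremented (hWF : M.WF) {p : ℕ × MInstr} {r : Bool} {v : ℕ × ℕ}
    (h : ReflTransGen (MStep M) x₀ (p.1, incReg r v)) {f : FunDecl} (hf : f ∈ (enc M).funs)
    (hs : f.src = aux M (.ack r)) :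
    Inv M x₀ (f.tgt, bodyEvents f.body + guard M p ::ₘ counters M v) := by
  rw [mem_funs_iff] at hf
  cases hf with
  | choose hq => exact absurd hs.symm (aux_ne_of_mem M (hWF.2.2.2 _ hq).1 _)
  | @pos q r' Q' Q'' hq hq2 =>
    simp only [fn, aux_inj, Loc.ack.injEq] at hs
    subst hs
    simp only [fn, bodyEvents_cons_add, bodyEvents_nil_add]
    refine .committed fun hqp => ?_
    subst hqp
    exact h.tail (.of_dec (mem_prog_of_snd_eq hq hq2))
  | _ => simp [startFun] at hs

theorem Inv.func (hWF : M.WF) (hx₀ : x₀.1 ∈ M.states) {x : ℕ × Multiset Ev}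
    (hx : Inv M x₀ x) {f : FunDecl} (hf : f ∈ (enc M).funs) (hs : f.src = x.1)
    (hn : nored x.2 x.1) : Inv M x₀ (f.tgt, bodyEvents f.body + x.2) := by
  have hQ {y : ℕ × ℕ × ℕ} (h : ReflTransGen (MStep M) x₀ y) : y.1 ∈ M.states :=
    MStep.mem_states_of_reflTransGen hWF hx₀ h
  cases hx with
  | start h =>
    obtain rfl : f = startFun M := by
      rw [mem_funs_iff] at hf
      cases hf with
      | start => rfl
      | choose hq => exact absurd hs.symm (aux_ne_of_mem M (hWF.2.2.2 _ hq).1 _)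
      | _ => simp at hs
    simpa [startFun] using Inv.boot h
  | boot | chosen | committed | finishing => exact (hasFun_of_src_eq M hWF hf hs).elim
  | machine h =>
    rw [mem_funs_iff] at hf
    cases hf with
    | choose =>
      subst hs
      exact .chosen h
    | _ => exact absurd hs (aux_ne_of_mem M (hQ h) _)
  | halted h =>
    exact .dead (by simpa using dead_of_mem_funs M hf (hs ▸ (aux_ne_of_mem M (hQ h) _).symm))
  | guarded h => exact Inv.func_of_guarded hWF h hf hs
  | testing h =>
    exact Inv.func_of_testing hWF h hf hs ((nored_counters_dec M).1 (nored_cons.1 hn).2)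
  | decremented h => exact Inv.func_of_decremented hWF h hf hs
  | dead hd =>
    obtain ⟨S, Ψ⟩ := x
    dsimp only at hs hn
    subst hs
    exact .dead (hd.macroStep M hWF (.func f hf hn))
theorem Inv.event (hWF : M.WF) (hx₀ : x₀.1 ∈ M.states) {x : ℕ × Multiset Ev}
    (hx : Inv M x₀ x) {e : Ev} (he : e ∈ x.2) (hs : e.src = x.1) :
    (e.tgt ∉ M.states ∧ Inv M x₀ (e.tgt, x.2.erase e)) ∨
      ∃ v, x.2.erase e = tok M e.tgt ::ₘ counters M v ∧ ReflTransGen (MStep M) x₀ (e.tgt, v) := by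
  cases hx with
  | start | halted => simp at he
  | boot h =>
    simp only [Multiset.mem_cons, Multiset.mem_singleton] at he
    rcases he with rfl | rfl
    · exact .inr ⟨(0, 0), by simp [counters], h⟩
    · simp at hs
  | machine h =>
    simp only [Multiset.mem_cons, mem_counters] at he
    rcases he with rfl | ⟨r, -, rfl⟩ <;>
      exact absurd hs (aux_ne_of_mem M (MStep.mem_states_of_reflTransGen hWF hx₀ h) _)
  | chosen h =>
    simp only [Multiset.mem_cons, mem_counters] at he
    rcases he with rfl | rfl | ⟨r, -, rfl⟩ <;> simp at hs
    exact .inl ⟨by simp, by simpa [Multiset.erase_cons_tail] using Inv.guarded h⟩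
  | guarded h | decremented h =>
    simp only [Multiset.mem_cons, mem_counters] at he
    rcases he with rfl | ⟨r, -, rfl⟩ <;> simp at hs
  | @testing p r v h =>
    simp only [Multiset.mem_cons, mem_counters] at he
    rcases he with rfl | ⟨r', hr, rfl⟩ <;> simp at hs
    subst hs
    obtain ⟨v, rfl⟩ := exists_eq_incReg hr
    rw [← cnt_cons_counters]
    exact .inl ⟨by simp, by simpa [Multiset.erase_cons_tail] using Inv.decremented h⟩
  | @committed p q T v h =>
    simp only [Multiset.mem_cons, mem_counters] at he
    rcases he with rfl | rfl | rfl | ⟨r, -, rfl⟩ <;> simp at hs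
    subst hs
    exact .inl ⟨by simp, by simpa [Multiset.erase_cons_tail] using Inv.finishing (p := p) (h rfl)⟩
  | finishing h =>
    simp only [Multiset.mem_cons, mem_counters] at he
    rcases he with rfl | rfl | ⟨r, -, rfl⟩ <;> simp at hs
    exact .inr ⟨_, by simp, h⟩
  | dead hd =>
    obtain ⟨l, -, -, h0 | ⟨-, hsrc⟩⟩ := hd
    · simp [h0] at he
    · exact absurd hs (hsrc e he)

theorem Inv.tick (hWF : M.WF) {x : ℕ × Multiset Ev} (hx : Inv M x₀ x) (hn : nored x.2 x.1) :
    Inv M x₀ (x.1, tickDown x.2) := by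
  have hdead (l : Loc) (hl : l ≠ .start) : Inv M x₀ (aux M l, 0) := .dead ⟨l, hl, rfl, .inl rfl⟩
  have htime {Ψ : Multiset Ev} (h : ∀ e ∈ Ψ, e.time = 0) : tickDown Ψ = 0 := tickDown_eq_zero h
  cases hx with
  | start h => simpa [tickDown] using Inv.start h
  | halted h => simpa [tickDown] using Inv.halted h
  | boot | chosen | finishing => simp at hn
  | machine h =>
    rw [htime (by simpa using fun _ => time_eq_zero_of_mem_counters M)]
    exact Inv.halted h
  | guarded | testing | decremented =>
    rw [htime (by simpa using fun _ => time_eq_zero_of_mem_counters M)]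
    exact hdead _ (by simp)
  | @committed p q T v h =>
    obtain rfl | hqp := eq_or_ne q p
    · simp at hn
    · rw [htime (by simpa using fun _ => time_eq_zero_of_mem_counters M)]
      exact hdead _ (by simp)
  | dead hd => exact .dead (hd.macroStep M hWF (.tick hn))

theorem Inv.macroStep (hWF : M.WF) (hx₀ : x₀.1 ∈ M.states) {x y : ℕ × Multiset Ev}
    (hx : Inv M x₀ x) (h : MacroStep (enc M) x y) : Inv M x₀ y := by
  cases h with
  | func f hf hn => exact hx.func hWF hx₀ hf rfl hn
  | event e he =>
    rcases hx.event hWF hx₀ he rfl with ⟨-, hy⟩ | ⟨v, hv, hR⟩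
    exacts [hy, hv ▸ .machine hR]
  | tick hn => exact hx.tick hWF hn

theorem Inv.macroStep_into_states (hWF : M.WF) (hx₀ : x₀.1 ∈ M.states) {x y : ℕ × Multiset Ev}
    (hx : Inv M x₀ x) (h : MacroStep (enc M) x y) (hx₁ : x.1 ∉ M.states)
    (hy₁ : y.1 ∈ M.states) :
    ∃ v, y.2 = tok M y.1 ::ₘ counters M v ∧ ReflTransGen (MStep M) x₀ (y.1, v) := by
  cases h with
  | func f hf => exact absurd hy₁ (tgt_not_mem M hf)
  | event e he =>
    rcases hx.event hWF hx₀ he rfl with ⟨hy, -⟩ | hy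
    exacts [absurd hy₁ hy, hy]
  | tick => exact absurd hy₁ hx₁

theorem Inv.exists_reach {x : ℕ × Multiset Ev} (hx : Inv M x₀ x) (hx₁ : x.1 ∈ M.states) :
    ∃ v, ReflTransGen (MStep M) x₀ (x.1, v) := by
  cases hx with
  | machine h | halted h => exact ⟨_, h⟩
  | dead hd =>
    obtain ⟨l, -, hS, -⟩ := hd
    exact absurd (hS ▸ hx₁) (aux_not_mem M l)
  | _ => simp at hx₁

end Invariant

section Simulation

variable {M}

theorem reach_guarded (hWF : M.WF) {p : ℕ × MInstr} (hp : p ∈ M.prog) (v : ℕ × ℕ) :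
    ReflTransGen (MacroStep (enc M)) (p.1, tok M p.1 ::ₘ counters M v)
      (aux M (.b p.1), guard M p ::ₘ counters M v) := by
  have hQ := (hWF.2.2.2 p hp).1
  have choose : MacroStep (enc M) (p.1, tok M p.1 ::ₘ counters M v)
      (aux M (.a p.1), guard M p ::ₘ tok M p.1 ::ₘ counters M v) :=
    .of_func ((mem_funs_iff M).2 (.choose hp)) rfl rfl
      (by simp [nored_counters, aux_ne_of_mem M hQ]) rfl
  have swap : MacroStep (enc M) (aux M (.a p.1), guard M p ::ₘ tok M p.1 ::ₘ counters M v)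
      (aux M (.b p.1), guard M p ::ₘ counters M v) :=
    .of_event (e := tok M p.1) (by simp) rfl rfl rfl (by simp [Multiset.erase_cons_tail])
  exact .head choose (.single swap)

theorem reach_of_committed (p : ℕ × MInstr) (T : ℕ) (v : ℕ × ℕ) :
    ReflTransGen (MacroStep (enc M))
      (aux M (.u p), fin M p T ::ₘ tok M T ::ₘ guard M p ::ₘ counters M v)
      (T, tok M T ::ₘ counters M v) := by
  have check : MacroStep (enc M)
      (aux M (.u p), fin M p T ::ₘ tok M T ::ₘ guard M p ::ₘ counters M v)
      (aux M (.w p), fin M p T ::ₘ tok M T ::ₘ counters M v) :=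
    .of_event (e := guard M p) (by simp) rfl rfl rfl (by simp [Multiset.erase_cons_tail])
  have jump : MacroStep (enc M) (aux M (.w p), fin M p T ::ₘ tok M T ::ₘ counters M v)
      (T, tok M T ::ₘ counters M v) :=
    .of_event (e := fin M p T) (by simp) rfl rfl rfl (by simp)
  exact .head check (.single jump)

theorem reach_of_inc (hWF : M.WF) {Q Q' : ℕ} {r : Bool} (hp : (Q, MInstr.inc r Q') ∈ M.prog)
    (v : ℕ × ℕ) :
    ReflTransGen (MacroStep (enc M)) (Q, tok M Q ::ₘ counters M v)
      (Q', tok M Q' ::ₘ counters M (incReg r v)) := by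
  have exec : MacroStep (enc M) (aux M (.b Q), guard M (Q, .inc r Q') ::ₘ counters M v)
      (aux M (.u (Q, .inc r Q')),
        fin M (Q, .inc r Q') Q' ::ₘ tok M Q' ::ₘ guard M (Q, .inc r Q') ::ₘ
          counters M (incReg r v)) := by
    refine .of_func ((mem_funs_iff M).2 (.inc hp rfl)) rfl rfl (by simp [nored_counters]) ?_
    simp only [fn, bodyEvents_cons_add, bodyEvents_nil_add, Multiset.cons_swap (cnt M r),
      cnt_cons_counters]
  exact (reach_guarded hWF hp v).trans (.head exec (reach_of_committed _ _ _))

theorem reach_testing (hWF : M.WF) {Q Q' Q'' : ℕ} {r : Bool}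
    (hp : (Q, MInstr.decjump r Q' Q'') ∈ M.prog) (v : ℕ × ℕ) :
    ReflTransGen (MacroStep (enc M)) (Q, tok M Q ::ₘ counters M v)
      (aux M (.dec r), guard M (Q, .decjump r Q' Q'') ::ₘ counters M v) :=
  (reach_guarded hWF hp v).tail
    (.of_func ((mem_funs_iff M).2 (.test hp rfl)) rfl rfl (by simp [nored_counters]) (by simp))

theorem reach_of_jz (hWF : M.WF) {Q Q' Q'' : ℕ} {r : Bool}
    (hp : (Q, MInstr.decjump r Q' Q'') ∈ M.prog) {v : ℕ × ℕ} (hz : getReg r v = 0) :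
    ReflTransGen (MacroStep (enc M)) (Q, tok M Q ::ₘ counters M v)
      (Q', tok M Q' ::ₘ counters M v) := by
  have zero : MacroStep (enc M) (aux M (.dec r), guard M (Q, .decjump r Q' Q'') ::ₘ counters M v)
      (aux M (.u (Q, .decjump r Q' Q'')), fin M (Q, .decjump r Q' Q'') Q' ::ₘ tok M Q' ::ₘ
        guard M (Q, .decjump r Q' Q'') ::ₘ counters M v) := by
    refine .of_func ((mem_funs_iff M).2 (.zero hp rfl)) rfl rfl ?_
      (by simp only [fn, bodyEvents_cons_add, bodyEvents_nil_add])
    simp [nored_counters_dec, hz]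
  exact (reach_testing hWF hp v).trans (.head zero (reach_of_committed _ _ _))

theorem reach_of_dec (hWF : M.WF) {Q Q' Q'' : ℕ} {r : Bool}
    (hp : (Q, MInstr.decjump r Q' Q'') ∈ M.prog) (v : ℕ × ℕ) :
    ReflTransGen (MacroStep (enc M)) (Q, tok M Q ::ₘ counters M (incReg r v))
      (Q'', tok M Q'' ::ₘ counters M v) := by
  have dec : MacroStep (enc M)
      (aux M (.dec r), guard M (Q, .decjump r Q' Q'') ::ₘ counters M (incReg r v))
      (aux M (.ack r), guard M (Q, .decjump r Q' Q'') ::ₘ counters M v) := by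
    rw [← cnt_cons_counters]
    exact .of_event (e := cnt M r) (by simp) rfl rfl rfl (by simp [Multiset.erase_cons_tail])
  have pos : MacroStep (enc M) (aux M (.ack r), guard M (Q, .decjump r Q' Q'') ::ₘ counters M v)
      (aux M (.u (Q, .decjump r Q' Q'')), fin M (Q, .decjump r Q' Q'') Q'' ::ₘ tok M Q'' ::ₘ
        guard M (Q, .decjump r Q' Q'') ::ₘ counters M v) :=
    .of_func ((mem_funs_iff M).2 (.pos hp rfl)) rfl rfl (by simp [nored_counters])
      (by simp only [fn, bodyEvents_cons_add, bodyEvents_nil_add])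
  exact (reach_testing hWF hp _).trans (.head dec (.head pos (reach_of_committed _ _ _)))

theorem reach_of_mstep (hWF : M.WF) {Q Q' : ℕ} {v v' : ℕ × ℕ} (h : MStep M (Q, v) (Q', v')) :
    ReflTransGen (MacroStep (enc M)) (Q, tok M Q ::ₘ counters M v)
      (Q', tok M Q' ::ₘ counters M v') := by
  cases h with
  | inc₁ hp | inc₂ hp => exact reach_of_inc hWF hp _
  | jz₁ hp | jz₂ hp => exact reach_of_jz hWF hp rfl
  | dec₁ hp | dec₂ hp => exact reach_of_dec hWF hp (_, _)

theorem reach_of_reflTransGen_mstep (hWF : M.WF) {x y : ℕ × ℕ × ℕ}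
    (h : ReflTransGen (MStep M) x y) :
    ReflTransGen (MacroStep (enc M)) (x.1, tok M x.1 ::ₘ counters M x.2)
      (y.1, tok M y.1 ::ₘ counters M y.2) := by
  induction h with
  | refl => exact .refl
  | tail _ h ih => exact ih.trans (reach_of_mstep hWF h)

theorem reach_init :
    ReflTransGen (MacroStep (enc M)) (aux M .start, 0)
      (M.init, tok M M.init ::ₘ counters M (0, 0)) := by
  have start : MacroStep (enc M) (aux M .start, 0) (aux M .boot, bootEv M ::ₘ {tok M M.init}) :=
    .of_func ((mem_funs_iff M).2 .start) rfl rfl (nored_zero _) (by simp [startFun])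
  have boot : MacroStep (enc M) (aux M .boot, bootEv M ::ₘ {tok M M.init})
      (M.init, tok M M.init ::ₘ counters M (0, 0)) :=
    .of_event (e := bootEv M) (by simp) rfl rfl rfl (by simp [counters])
  exact .head start (.single boot)

end Simulation

section Computability

-- Built from the same equivalences as the `Encodable` instances, hence with the same encodings.
abbrev primcodableEv : Primcodable Ev := Primcodable.ofEquiv _ Ev.equivProd
attribute [local instance] primcodableEv
abbrev primcodableFunDecl : Primcodable FunDecl := Primcodable.ofEquiv _ FunDecl.equivProd
attribute [local instance] primcodableFunDecl
abbrev primcodableContract : Primcodable Contract := Primcodable.ofEquiv _ Contract.equivProd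
attribute [local instance] primcodableContract
abbrev primcodableMInstr : Primcodable MInstr := Primcodable.ofEquiv _ MInstr.equivSum
attribute [local instance] primcodableMInstr
abbrev primcodableMinsky : Primcodable Minsky := Primcodable.ofEquiv _ Minsky.equivProd
attribute [local instance] primcodableMinsky
abbrev primcodableLoc : Primcodable Loc := Primcodable.ofEquiv _ Loc.equivSum
attribute [local instance] primcodableLoc

open Primrec

theorem primrec_list_sum : Primrec (List.sum : List ℕ → ℕ) :=
  (list_foldr .id (const 0) (nat_add.comp (fst.comp snd) (snd.comp snd)).to₂).of_eq
    fun _ => rfl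

theorem primrec_states : Primrec Minsky.states := fst.comp (of_equiv (e := Minsky.equivProd))

theorem primrec_init : Primrec Minsky.init :=
  fst.comp (snd.comp (of_equiv (e := Minsky.equivProd)))

theorem primrec_prog : Primrec Minsky.prog :=
  snd.comp (snd.comp (snd.comp (of_equiv (e := Minsky.equivProd))))

theorem primrec_aux : Primrec₂ aux :=
  nat_add.comp (nat_add.comp (primrec_list_sum.comp (primrec_states.comp fst)) (const 1))
    (Primrec.encode.comp snd)

theorem primrec_ev : Primrec₂ ev :=
  (of_equiv_symm (e := Ev.equivProd)).comp (pair (const 0) (pair (const 0) (pair fst snd)))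

theorem primrec_fn : Primrec fun x : ℕ × List Ev × ℕ => fn x.1 x.2.1 x.2.2 :=
  (of_equiv_symm (e := FunDecl.equivProd)).comp
    (pair fst (pair (const 0) (pair (fst.comp snd) (snd.comp snd))))

theorem primrec_loc_dec : Primrec Loc.dec :=
  ((of_equiv_symm (e := Loc.equivSum)).comp (sumInr.comp (sumInr.comp sumInl))).of_eq
    fun _ => rfl

theorem primrec_loc_ack : Primrec Loc.ack :=
  ((of_equiv_symm (e := Loc.equivSum)).comp
    (sumInr.comp (sumInr.comp (sumInr.comp sumInl)))).of_eq fun _ => rfl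

theorem primrec_loc_a : Primrec Loc.a :=
  ((of_equiv_symm (e := Loc.equivSum)).comp
    (sumInr.comp (sumInr.comp (sumInr.comp (sumInr.comp sumInl))))).of_eq fun _ => rfl

theorem primrec_loc_b : Primrec Loc.b :=
  ((of_equiv_symm (e := Loc.equivSum)).comp (sumInr.comp (sumInr.comp (sumInr.comp
    (sumInr.comp (sumInr.comp sumInl)))))).of_eq fun _ => rfl

theorem primrec_loc_u : Primrec Loc.u :=
  ((of_equiv_symm (e := Loc.equivSum)).comp (sumInr.comp (sumInr.comp (sumInr.comp
    (sumInr.comp (sumInr.comp (sumInr.comp sumInl))))))).of_eq fun _ => rfl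

theorem primrec_loc_w : Primrec Loc.w :=
  ((of_equiv_symm (e := Loc.equivSum)).comp (sumInr.comp (sumInr.comp (sumInr.comp
    (sumInr.comp (sumInr.comp (sumInr.comp sumInr))))))).of_eq fun _ => rfl

theorem primrec_cnt : Primrec₂ cnt :=
  primrec_ev.comp (primrec_aux.comp fst (primrec_loc_dec.comp snd))
    (primrec_aux.comp fst (primrec_loc_ack.comp snd))

theorem primrec_tok : Primrec₂ tok :=
  primrec_ev.comp (primrec_aux.comp fst (primrec_loc_a.comp snd))
    (primrec_aux.comp fst (primrec_loc_b.comp snd))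

theorem primrec_guard : Primrec₂ guard :=
  primrec_ev.comp (primrec_aux.comp fst (primrec_loc_u.comp snd))
    (primrec_aux.comp fst (primrec_loc_w.comp snd))

theorem primrec_fin : Primrec fun x : Minsky × (ℕ × MInstr) × ℕ => fin x.1 x.2.1 x.2.2 :=
  primrec_ev.comp (primrec_aux.comp fst (primrec_loc_w.comp (fst.comp snd))) (snd.comp snd)

variable {α β : Type} [Primcodable α] [Primcodable β]

theorem primrec_list_two {f g : α → β} (hf : Primrec f) (hg : Primrec g) :
    Primrec fun a => [f a, g a] :=
  list_cons.comp hf (list_cons.comp hg (const []))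

theorem primrec_list_three {f g h : α → β} (hf : Primrec f) (hg : Primrec g) (hh : Primrec h) :
    Primrec fun a => [f a, g a, h a] :=
  list_cons.comp hf (primrec_list_two hg hh)

theorem primrec_startFun : Primrec startFun :=
  primrec_fn.comp (α := Minsky) (pair (primrec_aux.comp .id (const Loc.start)) (pair
    (primrec_list_two (primrec_ev.comp (primrec_aux.comp .id (const Loc.boot)) primrec_init)
      (primrec_tok.comp .id primrec_init))
    (primrec_aux.comp .id (const Loc.boot))))

theorem primrec_chooseFun : Primrec₂ chooseFun :=
  primrec_fn.comp (pair (fst.comp snd) (pair (list_cons.comp primrec_guard (const []))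
    (primrec_aux.comp fst (primrec_loc_a.comp (fst.comp snd)))))

theorem primrec_execFuns : Primrec₂ execFuns := by
  have hinc : Primrec fun y : (Minsky × (ℕ × MInstr)) × (Bool × ℕ) =>
      [fn (aux y.1.1 (.b y.1.2.1)) [fin y.1.1 y.1.2 y.2.2, tok y.1.1 y.2.2, cnt y.1.1 y.2.1]
        (aux y.1.1 (.u y.1.2))] := by
    have hM := fst.comp (fst (α := Minsky × (ℕ × MInstr)) (β := Bool × ℕ))
    have hp := snd.comp (fst (α := Minsky × (ℕ × MInstr)) (β := Bool × ℕ))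
    refine list_cons.comp (primrec_fn.comp (pair
      (primrec_aux.comp hM (primrec_loc_b.comp (fst.comp hp))) (pair
      (primrec_list_three (primrec_fin.comp (pair hM (pair hp (snd.comp snd))))
        (primrec_tok.comp hM (snd.comp snd)) (primrec_cnt.comp hM (fst.comp snd)))
      (primrec_aux.comp hM (primrec_loc_u.comp hp))))) (const [])
  have hdec : Primrec fun y : (Minsky × (ℕ × MInstr)) × (Bool × ℕ × ℕ) =>
      [fn (aux y.1.1 (.b y.1.2.1)) [] (aux y.1.1 (.dec y.2.1)),
       fn (aux y.1.1 (.dec y.2.1)) [fin y.1.1 y.1.2 y.2.2.1, tok y.1.1 y.2.2.1]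
         (aux y.1.1 (.u y.1.2)),
       fn (aux y.1.1 (.ack y.2.1)) [fin y.1.1 y.1.2 y.2.2.2, tok y.1.1 y.2.2.2]
         (aux y.1.1 (.u y.1.2))] := by
    have hM := fst.comp (fst (α := Minsky × (ℕ × MInstr)) (β := Bool × ℕ × ℕ))
    have hp := snd.comp (fst (α := Minsky × (ℕ × MInstr)) (β := Bool × ℕ × ℕ))
    have hr := fst.comp (snd (α := Minsky × (ℕ × MInstr)) (β := Bool × ℕ × ℕ))
    have hu := primrec_aux.comp hM (primrec_loc_u.comp hp)
    have hbranch {T : (Minsky × (ℕ × MInstr)) × (Bool × ℕ × ℕ) → ℕ} (hT : Primrec T) :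
        Primrec fun y => [fin y.1.1 y.1.2 (T y), tok y.1.1 (T y)] :=
      primrec_list_two (primrec_fin.comp (pair hM (pair hp hT))) (primrec_tok.comp hM hT)
    exact primrec_list_three
      (primrec_fn.comp (pair (primrec_aux.comp hM (primrec_loc_b.comp (fst.comp hp)))
        (pair (const []) (primrec_aux.comp hM (primrec_loc_dec.comp hr)))))
      (primrec_fn.comp (pair (primrec_aux.comp hM (primrec_loc_dec.comp hr))
        (pair (hbranch (fst.comp (snd.comp snd))) hu)))
      (primrec_fn.comp (pair (primrec_aux.comp hM (primrec_loc_ack.comp hr))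
        (pair (hbranch (snd.comp (snd.comp snd))) hu)))
  refine (sumCasesOn ((of_equiv (e := MInstr.equivSum)).comp (snd.comp snd)) hinc.to₂
    hdec.to₂).of_eq ?_
  rintro ⟨M, Q, _ | _⟩ <;> rfl

theorem primrec_locs : Primrec locs :=
  list_append.comp (list_append.comp (list_append.comp (list_append.comp
    (const [Loc.start, .boot, .dec false, .dec true, .ack false, .ack true])
    (list_map primrec_states (primrec_loc_a.comp snd).to₂))
    (list_map primrec_states (primrec_loc_b.comp snd).to₂))
    (list_map primrec_prog (primrec_loc_u.comp snd).to₂))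
    (list_map primrec_prog (primrec_loc_w.comp snd).to₂)

theorem primrec_enc : Primrec enc :=
  (of_equiv_symm (e := Contract.equivProd)).comp (pair
    (list_append.comp primrec_states (list_map primrec_locs primrec_aux))
    (pair (primrec_aux.comp .id (const Loc.start))
      (list_cons.comp primrec_startFun (list_flatMap primrec_prog
        (list_cons.comp primrec_chooseFun primrec_execFuns).to₂))))

theorem computable_enc : ∃ F : ℕ → ℕ, Computable F ∧
    ∀ M : Minsky, F (Encodable.encode M) = Encodable.encode (enc M) :=
  ⟨fun n => (Encodable.decode (α := Minsky) n).casesOn 0 fun M => Encodable.encode (enc M),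
    (option_casesOn .decode (const 0) (Primrec.encode.comp (primrec_enc.comp snd)).to₂).to_comp,
    fun M => by simp [Encodable.encodek]⟩

end Computability

variable {M}

theorem halts_iff_reachable (hWF : M.WF) : M.Halts ↔ Reachable (enc M) M.final := by
  constructor
  · rintro ⟨v₁, v₂, h⟩
    obtain ⟨t', h'⟩ :=
      MacroStep.exists_steps_of_reflTransGen
        (reach_init.trans (reach_of_reflTransGen_mstep hWF h)) 0
    exact ⟨0, t', _, h'⟩
  · rintro ⟨t, t', Ψ, h⟩
    have hinv : Inv M (M.init, 0, 0) (M.final, Ψ) :=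
      Lifted.reflTransGen (fun _ _ hx => hx.macroStep hWF hWF.1)
        (show Lifted _ _ ⟨aux M .start, .none, 0, t⟩ from Inv.start .refl) h
    obtain ⟨v, hv⟩ := hinv.exists_reach hWF.2.1
    exact ⟨v.1, v.2, hv⟩

theorem encodes_reachable_of_step_into_states (hWF : M.WF) {Q Q' : ℕ} {v : ℕ × ℕ}
    {t t' : ℕ} {c : Config} {σ' : Sig} {Ψ' : Multiset Ev} (hQ : Q ∈ M.states)
    (h : ReflTransGen (Step (enc M)) ⟨Q, .none, tok M Q ::ₘ counters M v, t⟩ c)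
    (hstep : Step (enc M) c ⟨Q', σ', Ψ', t'⟩) (hc : c.state ∉ M.states) (hQ' : Q' ∈ M.states) :
    σ' = .none ∧
      ∃ v', Ψ' = tok M Q' ::ₘ counters M v' ∧ ReflTransGen (MStep M) (Q, v) (Q', v') := by
  have hc' : Lifted (enc M) (Inv M (Q, v)) c :=
    Lifted.reflTransGen (fun _ _ hx => hx.macroStep hWF hQ)
      (show Lifted _ _ ⟨Q, .none, _, t⟩ from Inv.machine .refl) h
  obtain ⟨hσ, Ψ₀, hΨ₀, hm⟩ := hc'.macroStep_of_step_of_state_ne hstep fun h => hc (h ▸ hQ')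
  exact ⟨hσ, hΨ₀.macroStep_into_states hWF hQ hm hc hQ'⟩

end Encoding

open Encoding in
/-- There is a computable map taking each Minsky machine `M` to a
μStipula^I contract `I_M` whose states include those of `M`, with events `e₁ = (0 ≫ dec₁
⇒ ackdec₁)`, `e₂ = (0 ≫ dec₂ ⇒ ackdec₂)` and, for each machine state `Q`, an event
`e₃ Q = (0 ≫ aQ ⇒ bQ)`, such that, writing `⟦v₁,v₂⟧_Q = msem e₁ e₂ e₃ M Q v₁ v₂`:
(0) the initial configuration of `I_M` reaches `I_M(Q₀, −, ⟦0,0⟧_{Q₀})`;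
(1) machine transitions are simulated; (2) `I_M` does not transit to unreachable Minsky
states; consequently `M` halts iff `Q_F` is reachable in `I_M`. -/
theorem minsky_encoding_instantaneous :
    ∃ (enc : Minsky → Contract) (e₁ e₂ : Minsky → Ev) (e₃ : Minsky → ℕ → Ev),
      (∃ F : ℕ → ℕ, Computable F ∧
        ∀ M : Minsky, F (Encodable.encode M) = Encodable.encode (enc M)) ∧
      ∀ M : Minsky, M.WF →
        (enc M).WF ∧ Instantaneous (enc M) ∧
        (∀ q ∈ M.states, q ∈ (enc M).states) ∧
        (e₁ M).time = 0 ∧ (e₂ M).time = 0 ∧ (∀ Q, (e₃ M Q).time = 0) ∧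
        -- (0)
        (∃ t t', Relation.ReflTransGen (Step (enc M))
            ⟨(enc M).init, Sig.none, 0, t⟩
            ⟨M.init, Sig.none, msem e₁ e₂ e₃ M M.init 0 0, t'⟩) ∧
        -- (1)
        (∀ Qi Qj v₁ v₂ v₁' v₂', MStep M (Qi, v₁, v₂) (Qj, v₁', v₂') →
          ∀ t, ∃ t', Relation.ReflTransGen (Step (enc M))
            ⟨Qi, Sig.none, msem e₁ e₂ e₃ M Qi v₁ v₂, t⟩
            ⟨Qj, Sig.none, msem e₁ e₂ e₃ M Qj v₁' v₂', t'⟩) ∧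
        -- (2)
        (∀ (Qi v₁ v₂ t : ℕ) (c : Config) (Qj : ℕ) (S' : Sig) (Ψ' : Multiset Ev) (t₂ : ℕ),
          Qi ∈ M.states →
          Relation.ReflTransGen (Step (enc M))
            ⟨Qi, Sig.none, msem e₁ e₂ e₃ M Qi v₁ v₂, t⟩ c →
          Step (enc M) c ⟨Qj, S', Ψ', t₂⟩ →
          c.state ∉ M.states → Qj ∈ M.states →
          S' = Sig.none ∧ ∃ v₁' v₂', Ψ' = msem e₁ e₂ e₃ M Qj v₁' v₂' ∧
            Relation.ReflTransGen (MStep M) (Qi, v₁, v₂) (Qj, v₁', v₂')) ∧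
        (M.Halts ↔ Reachable (enc M) M.final) := by
  refine ⟨enc, fun M => cnt M false, fun M => cnt M true, tok, computable_enc, fun M hWF => ?_⟩
  simp only [msem_eq]
  refine ⟨enc_wf M hWF, enc_instantaneous M, fun q hq => by simp [enc, hq], rfl, rfl,
    fun _ => rfl, ⟨0, MacroStep.exists_steps_of_reflTransGen reach_init 0⟩,
    fun _ _ _ _ _ _ h t => MacroStep.exists_steps_of_reflTransGen (reach_of_mstep hWF h) t,
    fun _ _ _ _ _ _ _ _ _ hQ h hstep hc hQ' => ?_, halts_iff_reachable hWF⟩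
  obtain ⟨hσ, v', hΨ', hR⟩ := encodes_reachable_of_step_into_states hWF hQ h hstep hc hQ'
  exact ⟨hσ, v'.1, v'.2, hΨ', hR⟩

end MicroStipula
end
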